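/- arXiv:2102.05634 — 5 statements merged into one kernel-verified Lean document; each statement's English description precedes it below -/
import Mathlib

section
/- Let V be a real vector space of dimension 2m+2 with a nondegenerate symmetric bilinear form g of Lorentzian signature (2m+1,1), and let N be a maximal totally null complex subspace of the complexification of V (with respect to the complex-bilinear extension of g). Then the intersection of N with its complex conjugate has complex dimension exactly one. -/
/-- The orthogonal complement of a subspace with respect to a bilinear form. -/
def BilinOrthog {R M : Type*} [CommRing R] [AddCommGroup M] [Module R M]
    (g : M →ₗ[R] M →ₗ[R] R) (N : Submodule R M) : Submodule R M where
  carrier := {v | ∀ w ∈ N, g w v = 0}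
  add_mem' := by intro x y hx hy w hw; simp [hx w hw, hy w hw]
  zero_mem' := by intro w hw; simp
  smul_mem' := by intro c x hx w hw; simp [hx w hw]

/-!
The hermitian form `h x y = G x (conj y)` is positive definite on the `G`-orthogonal complement
of the timelike real vector `x₀ = e (2m+1)`.

Upper bound: `h` vanishes on `N ∩ N̄`, so `x ↦ G x x₀` is injective there.

Lower bound: if `N ∩ N̄ = 0`, then `W = N ⊕ N̄` because both are half-dimensional, and since `x₀`
is real it splits as `x₀ = n + n̄` with `n ∈ N`. Total nullity of `N` and `N̄` makes
`y = n - n̄` orthogonal to `x₀` with `h y y = G x₀ x₀ < 0`, which is impossible.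
-/

open Module

theorem mem_bilinOrthog_iff {R M : Type*} [CommRing R] [AddCommGroup M] [Module R M]
    {g : M →ₗ[R] M →ₗ[R] R} {N : Submodule R M} {v : M} :
    v ∈ BilinOrthog g N ↔ ∀ w ∈ N, g w v = 0 :=
  Iff.rfl

theorem two_mul_finrank_eq_of_eq_bilinOrthog {K V : Type*} [Field K] [AddCommGroup V]
    [Module K V] [FiniteDimensional K V] {B : V →ₗ[K] V →ₗ[K] K} (hB : B.Nondegenerate)
    {N : Submodule K V} (hN : N = BilinOrthog B N) :
    2 * finrank K N = finrank K V := by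
  have h : finrank K (BilinOrthog B N) = finrank K V - finrank K N :=
    LinearMap.BilinForm.finrank_orthogonal hB N
  rw [← hN] at h
  have := Submodule.finrank_le N
  omega

theorem LinearMap.apply_eq_sum_of_apply_basis_eq_ite {ι R M : Type*} [Fintype ι] [DecidableEq ι]
    [CommSemiring R] [AddCommMonoid M] [Module R M] {B : M →ₗ[R] M →ₗ[R] R}
    (b : Basis ι R M) {d : ι → R} (hB : ∀ i j, B (b i) (b j) = if i = j then d i else 0)
    (x y : M) : B x y = ∑ i, d i * b.repr x i * b.repr y i := by
  rw [← LinearMap.sum_repr_mul_repr_mul b b (B := B) x y, Finsupp.sum_fintype _ _ (by simp)]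
  refine Finset.sum_congr rfl fun i _ => ?_
  rw [Finsupp.sum_fintype _ _ (by simp)]
  simp only [hB, smul_eq_mul, mul_ite, mul_zero, Finset.sum_ite_eq, Finset.mem_univ, if_true]
  ring

section Conjugation

variable {W : Type*} [AddCommGroup W] [Module ℂ W] {G : W →ₗ[ℂ] W →ₗ[ℂ] ℂ}
  {conj : W →ₛₗ[starRingEnd ℂ] W} {N : Submodule ℂ W}

theorem Module.Basis.repr_conj {ι : Type*} [Fintype ι] (e : Basis ι ℂ W)
    (hereal : ∀ i, conj (e i) = e i) (x : W) (i : ι) :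
    e.repr (conj x) i = star (e.repr x i) := by
  have hx : conj x = ∑ j, star (e.repr x j) • e j := by
    conv_lhs => rw [← e.sum_repr x]
    simp only [map_sum, LinearMap.map_smulₛₗ, hereal]
    rfl
  rw [hx, e.repr_sum_self]

theorem comap_conj_eq_bilinOrthog (hconj2 : ∀ v, conj (conj v) = v)
    (hGconj : ∀ v w, G (conj v) (conj w) = star (G v w)) (hN : N = BilinOrthog G N) :
    N.comap conj = BilinOrthog G (N.comap conj) := by
  have hnull : ∀ v w, G (conj v) (conj w) = 0 ↔ G v w = 0 := fun v w => by
    rw [hGconj, star_eq_zero]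
  ext v
  rw [Submodule.mem_comap, mem_bilinOrthog_iff]
  conv_lhs => rw [hN, mem_bilinOrthog_iff]
  constructor
  · intro hv w hw
    exact (hnull w v).1 (hv (conj w) hw)
  · intro hv w hw
    rw [← hnull, hconj2]
    exact hv (conj w) (by rwa [Submodule.mem_comap, hconj2])

theorem exists_eq_add_conj (hconj2 : ∀ v, conj (conj v) = v)
    (hinf : N ⊓ N.comap conj = ⊥) (hsup : N ⊔ N.comap conj = ⊤) {x : W} (hx : conj x = x) :
    ∃ n ∈ N, x = n + conj n := by
  obtain ⟨a, ha, b, hb, rfl⟩ := Submodule.mem_sup.1 (hsup ▸ Submodule.mem_top : x ∈ N ⊔ _)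
  rw [map_add] at hx
  have hdiff : a - conj b ∈ N ⊓ N.comap conj := by
    refine ⟨N.sub_mem ha hb, ?_⟩
    show conj (a - conj b) ∈ N
    rw [map_sub, hconj2, sub_eq_sub_iff_add_eq_add.2 hx]
    exact N.sub_mem ha hb
  rw [hinf, Submodule.mem_bot, sub_eq_zero] at hdiff
  exact ⟨a, ha, by rw [hdiff, hconj2]⟩

variable {x₀ : W} (hpos : ∀ x, G x x₀ = 0 → x ≠ 0 → 0 < (G x (conj x)).re)
include hpos

theorem separatingLeft_of_re_apply_conj_pos : G.SeparatingLeft := by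
  intro x hx
  by_contra hne
  simpa [hx] using hpos x (hx x₀) hne

theorem finrank_inf_comap_conj_le_one (hN : N ≤ BilinOrthog G N) :
    finrank ℂ ↥(N ⊓ N.comap conj) ≤ 1 := by
  let f : ↥(N ⊓ N.comap conj) →ₗ[ℂ] ℂ := G.flip x₀ ∘ₗ Submodule.subtype _
  have hf : Function.Injective f := by
    rw [← LinearMap.ker_eq_bot, Submodule.eq_bot_iff]
    rintro ⟨x, hxN, hxNbar⟩ hx
    have hnull : G x (conj x) = 0 := hN hxNbar x hxN
    by_contra hne
    simpa [hnull] using hpos x hx fun h => hne (Subtype.ext h)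
  simpa using LinearMap.finrank_le_finrank_of_injective hf

theorem inf_comap_conj_ne_bot [FiniteDimensional ℂ W] (hsymm : ∀ v w, G v w = G w v)
    (hconj2 : ∀ v, conj (conj v) = v) (hGconj : ∀ v w, G (conj v) (conj w) = star (G v w))
    (hx₀ : conj x₀ = x₀) (hx₀x₀ : (G x₀ x₀).re < 0) (hN : N = BilinOrthog G N) :
    N ⊓ N.comap conj ≠ ⊥ := by
  intro hinf
  have hB : G.Nondegenerate :=
    (LinearMap.IsRefl.nondegenerate_iff_separatingLeft fun x y h => by rwa [hsymm])
      |>.2 (separatingLeft_of_re_apply_conj_pos hpos)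
  have hsup : N ⊔ N.comap conj = ⊤ := by
    refine Submodule.eq_top_of_finrank_eq ?_
    have := Submodule.finrank_sup_add_finrank_inf_eq N (N.comap conj)
    rw [hinf, finrank_bot, add_zero] at this
    have h₁ := two_mul_finrank_eq_of_eq_bilinOrthog hB hN
    have h₂ := two_mul_finrank_eq_of_eq_bilinOrthog hB (comap_conj_eq_bilinOrthog hconj2 hGconj hN)
    omega
  obtain ⟨n, hn, rfl⟩ := exists_eq_add_conj hconj2 hinf hsup hx₀
  have hnn : G n n = 0 := (hN.le hn) n hn
  have hnn' : G (conj n) (conj n) = 0 := by rw [hGconj, hnn, star_zero]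
  have hsymm' := hsymm (conj n) n
  have hy₀ : G (n - conj n) (n + conj n) = 0 := by
    simp only [map_add, map_sub, LinearMap.sub_apply] at hsymm' ⊢
    linear_combination (-1 : ℂ) * hnn' + hnn - hsymm'
  have hyy : G (n - conj n) (conj (n - conj n)) = G (n + conj n) (n + conj n) := by
    simp only [map_add, map_sub, hconj2, LinearMap.add_apply, LinearMap.sub_apply]
    linear_combination (-2 : ℂ) * hnn - 2 * hnn'
  have hy : n - conj n ≠ 0 := fun h => by simp [h] at hyy; simp [← hyy] at hx₀x₀
  linarith [hpos _ hy₀ hy, congrArg Complex.re hyy]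

end Conjugation

theorem re_apply_conj_pos_of_lorentzian {ι W : Type*} [Fintype ι] [DecidableEq ι]
    [AddCommGroup W] [Module ℂ W] {G : W →ₗ[ℂ] W →ₗ[ℂ] ℂ} (conj : W →ₛₗ[starRingEnd ℂ] W)
    (e : Basis ι ℂ W) (hereal : ∀ i, conj (e i) = e i) (t : ι)
    (hGe : ∀ i j, G (e i) (e j) = if i = j then (if i = t then -1 else 1) else 0)
    (x : W) (hx : G x (e t) = 0) (hne : x ≠ 0) : 0 < (G x (conj x)).re := by
  have hG := LinearMap.apply_eq_sum_of_apply_basis_eq_ite e hGe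
  have ht : e.repr x t = 0 := by
    simpa [hG, Finsupp.single_apply] using hx
  have hterm : ∀ i, ((if i = t then -1 else 1) * e.repr x i * e.repr (conj x) i).re =
      Complex.normSq (e.repr x i) := by
    intro i
    rw [e.repr_conj hereal]
    split_ifs with hi
    · simp [hi, ht]
    · simp [Complex.mul_conj]
  rw [hG, Complex.re_sum, Finset.sum_congr rfl fun i _ => hterm i]
  obtain ⟨i, hi⟩ : ∃ i, e.repr x i ≠ 0 := by
    by_contra! h
    exact hne (e.ext_elem (by simpa using h))
  exact Finset.sum_pos' (fun j _ => Complex.normSq_nonneg _)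
    ⟨i, Finset.mem_univ i, Complex.normSq_pos.2 hi⟩

/-- `W` stands for `ℂ ⊗ V`, `G` for the complex-bilinear extension of `g`, `e` for a real
`g`-orthonormal basis whose last vector is timelike, and `N.comap conj` for `N̄`. -/
theorem real_index_one (m : ℕ) (W : Type*) [AddCommGroup W] [Module ℂ W]
    [FiniteDimensional ℂ W]
    (G : W →ₗ[ℂ] W →ₗ[ℂ] ℂ) (hsymm : ∀ v w, G v w = G w v)
    (conj : W →ₛₗ[starRingEnd ℂ] W)
    (hconj2 : ∀ v, conj (conj v) = v)
    (hGconj : ∀ v w, G (conj v) (conj w) = star (G v w))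
    (e : Module.Basis (Fin (2 * m + 2)) ℂ W)
    (hereal : ∀ i, conj (e i) = e i)
    (hGe : ∀ i j, G (e i) (e j) =
      if i = j then (if (i : ℕ) = 2 * m + 1 then (-1 : ℂ) else 1) else 0)
    (N : Submodule ℂ W) (hN : N = BilinOrthog G N) :
    Module.finrank ℂ ↥(N ⊓ N.comap conj) = 1 := by
  let t : Fin (2 * m + 2) := ⟨2 * m + 1, by omega⟩
  have hGe' : ∀ i j, G (e i) (e j) = if i = j then (if i = t then -1 else 1) else 0 := by
    simp [hGe, t, Fin.ext_iff]
  have hpos := re_apply_conj_pos_of_lorentzian conj e hereal t hGe'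
  have htt : (G (e t) (e t)).re < 0 := by simp [hGe']
  have hle := finrank_inf_comap_conj_le_one hpos hN.le
  have hne := inf_comap_conj_ne_bot hpos hsymm hconj2 hGconj (hereal t) htt hN
  have := mt Submodule.finrank_eq_zero.1 hne
  omega
end

section
/- Let (V,g) be a complex quadratic space and N a totally null subspace. For any nonzero element ν of the top exterior power of the annihilator of N in V*, the (m+1)-form ν is totally null, meaning the contraction of ν with itself via the inverse metric in the first index vanishes: ν_{a a₁…a_m} ν^a{}_{b₁…b_m} = 0. -/
/-!
The subspace `N` is Lagrangian: it is null and has half the dimension of `V`, so it is its own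
orthogonal. The vector `w` dual to `ν(·, x)` pairs to zero with `N`, because `ν` vanishes as soon
as its first argument lies in `N`; hence `w ∈ N`, and therefore `ν(w, y) = 0`.
-/

namespace LinearMap.BilinForm

variable {K V : Type*} [Field K] [AddCommGroup V] [Module K V] [FiniteDimensional K V]

theorem orthogonal_eq_self_of_totallyNull {B : LinearMap.BilinForm K V} (hB : B.Nondegenerate)
    {W : Submodule K V} (hW : ∀ u ∈ W, ∀ v ∈ W, B u v = 0)
    (hdim : 2 * Module.finrank K W = Module.finrank K V) :
    B.orthogonal W = W := by
  have hle : W ≤ B.orthogonal W := fun v hv n hn => hW n hn v hv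
  refine (Submodule.eq_of_le_of_finrank_le hle ?_).symm
  rw [finrank_orthogonal hB]
  omega

end LinearMap.BilinForm

theorem totally_null_form_contraction_general (m : ℕ) (V : Type*) [AddCommGroup V] [Module ℂ V]
    [FiniteDimensional ℂ V] (hdim : Module.finrank ℂ V = 2 * m + 2)
    (g : V →ₗ[ℂ] V →ₗ[ℂ] ℂ)
    (hnd : ∀ v, (∀ w, g v w = 0) → v = 0)
    (N : Submodule ℂ V) (hNdim : Module.finrank ℂ N = m + 1)
    (hNnull : ∀ u ∈ N, ∀ v ∈ N, g u v = 0)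
    (ν : AlternatingMap ℂ V ℂ (Fin (m + 1)))
    (hνN : ∀ v ∈ N, ∀ x : Fin m → V, ν (Fin.cons v x) = 0) :
    ∀ (x y : Fin m → V) (w : V), (∀ u, g w u = ν (Fin.cons u x)) →
      ν (Fin.cons w y) = 0 := by
  intro x y w hw
  have hg : LinearMap.BilinForm.Nondegenerate g.flip :=
    (LinearMap.BilinForm.Nondegenerate.ofSeparatingLeft hnd).flip
  have hN : LinearMap.BilinForm.orthogonal g.flip N = N :=
    LinearMap.BilinForm.orthogonal_eq_self_of_totallyNull hg
      (fun u hu v hv => hNnull v hv u hu) (by omega)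
  have hwN : w ∈ N := by
    rw [← hN]
    exact fun n hn => (hw n).trans (hνN n hn x)
  exact hνN w hwN y

/-- Let `(V,g)` be a complex quadratic space of dimension `2m+2`
and `N` a totally null subspace of dimension `m+1`.  For any element `ν` of
`Λ^{m+1} Ann(N)` — encoded here as an alternating `(m+1)`-form annihilated by
interior product with every vector of `N` — the form `ν` is totally null: the
contraction `ν_{a a₁…a_m} ν^a{}_{b₁…b_m} = 0`.  Coordinate-freely: whenever
`w` is the `g`-dual of the covector `u ↦ ν(u, x₁, …, x_m)`, then
`ν(w, y₁, …, y_m) = 0` for all `y`. -/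
theorem totally_null_form_contraction (m : ℕ) (V : Type*) [AddCommGroup V] [Module ℂ V]
    [FiniteDimensional ℂ V] (hdim : Module.finrank ℂ V = 2 * m + 2)
    (g : V →ₗ[ℂ] V →ₗ[ℂ] ℂ)
    (hsymm : ∀ v w, g v w = g w v)
    (hnd : ∀ v, (∀ w, g v w = 0) → v = 0)
    (N : Submodule ℂ V) (hNdim : Module.finrank ℂ N = m + 1)
    (hNnull : ∀ u ∈ N, ∀ v ∈ N, g u v = 0)
    (ν : AlternatingMap ℂ V ℂ (Fin (m + 1))) (hν : ν ≠ 0)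
    (hνN : ∀ v ∈ N, ∀ x : Fin m → V, ν (Fin.cons v x) = 0) :
    ∀ (x y : Fin m → V) (w : V), (∀ u, g w u = ν (Fin.cons u x)) →
      ν (Fin.cons w y) = 0 :=
  totally_null_form_contraction_general m V hdim g hnd N hNdim hNnull ν hνN
end

section
/- Let (V,g) be Lorentzian of dimension 2m+2, let κ be a nonzero null 1-form with associated null vector k = g⁻¹(κ), and let ω be a 2-form with k⌟ω = 0 and such that ω induces a Hermitian structure on the screen space of K = span(k) (i.e. the induced endomorphism squares to −Id). Then the 3-form ρ = 3 κ ∧ ω (i.e. ρ_{abc} = 3κ_{[a}ω_{bc]}) satisfies ρ_{ab}{}^e ρ_{cde} = −4 κ_{[a} g_{b][c} κ_{d]}. -/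
/-!
Writing `κ = g(k, ·)` and `v = κ(a) b − κ(b) a`, the `g`-dual `w` of `ρ(a, b, ·)` is
`ω(v, ·)^♯ + ω(a, b) k`. Since `v` lies in `κ^⊥`, the Hermitian identity turns `ω(w, ·)` into
`−g(v, ·)` modulo `κ`, and `κ(w) = ρ(a, b, k) = 0` because `k` is null and in the kernel of `ω`.
Contracting with `c, d` the `κ`-terms cancel and `κ(c) g(v, d) − κ(d) g(v, c)` is the right-hand
side.
-/

/-- The Robinson 3-form `ρ_{abc} = 3 κ_{[a} ω_{bc]}` associated to the optical
1-form `κ = g(k,·)` and the 2-form `ω`. -/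
def Rob3 {V : Type*} [AddCommGroup V] [Module ℝ V]
    (g ω : V →ₗ[ℝ] V →ₗ[ℝ] ℝ) (k : V) (x y z : V) : ℝ :=
  g k x * ω y z - g k y * ω x z + g k z * ω x y

section Rob3

variable {V : Type*} [AddCommGroup V] [Module ℝ V] (g ω : V →ₗ[ℝ] V →ₗ[ℝ] ℝ) (k : V)

theorem rob3_eq_omega_add (a b x : V) :
    Rob3 g ω k a b x = ω (g k a • b - g k b • a) x + ω a b * g k x := by
  simp only [Rob3, map_sub, map_smul, LinearMap.sub_apply, LinearMap.smul_apply, smul_eq_mul]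
  ring

variable {g ω k}

theorem rob3_apply_null (hkk : g k k = 0) (hωk : ∀ v, ω v k = 0) (a b : V) :
    Rob3 g ω k a b k = 0 := by
  simp only [Rob3, hkk, hωk]
  ring

theorem omega_apply_of_dual_eq_omega_add {l v u : V} (t : ℝ)
    (hωk : ∀ v, ω k v = 0)
    (hHerm : ∀ v w u, (∀ x, g u x = ω v x) →
      ω u w = -(g v w - g k v * g l w - g l v * g k w))
    (hkv : g k v = 0) (hu : ∀ x, g u x = ω v x + t * g k x) (y : V) :
    ω u y = -g v y + g l v * g k y := by
  have hdual : ∀ x, g (u - t • k) x = ω v x := fun x => by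
    simp only [map_sub, map_smul, LinearMap.sub_apply, LinearMap.smul_apply, smul_eq_mul, hu]
    ring
  have h := hHerm v y (u - t • k) hdual
  simp only [map_sub, map_smul, LinearMap.sub_apply, LinearMap.smul_apply, smul_eq_mul, hωk,
    hkv] at h
  linarith

end Rob3

theorem robinson_three_form_squared_general (m : ℕ) (V : Type*) [AddCommGroup V] [Module ℝ V]
    (g : V →ₗ[ℝ] V →ₗ[ℝ] ℝ)
    (e : Module.Basis (Fin (2 * m + 2)) ℝ V)
    (hGe : ∀ i j, g (e i) (e j) =
      if i = j then (if (i : ℕ) = 2 * m + 1 then (-1 : ℝ) else 1) else 0)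
    (k : V) (hkk : g k k = 0)
    (l : V)
    (ω : V →ₗ[ℝ] V →ₗ[ℝ] ℝ)
    (hωalt : ∀ v w, ω v w = - ω w v)
    (hωk : ∀ v, ω k v = 0)
    (hHerm : ∀ v w u, (∀ x, g u x = ω v x) →
      ω u w = -(g v w - g k v * g l w - g l v * g k w)) :
    ∀ a b c d w, (∀ x, g w x = Rob3 g ω k a b x) →
      Rob3 g ω k c d w =
        -(g k a * g b c * g k d - g k b * g a c * g k d
          - g k a * g b d * g k c + g k b * g a d * g k c) := by
  have hg : LinearMap.BilinForm.IsSymm g :=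
    (LinearMap.BilinForm.isSymm_iff_basis e).2 fun i j => by
      rcases eq_or_ne i j with rfl | hij
      · rfl
      · simp only [hGe, hij, hij.symm, if_false]
  intro a b c d w hw
  set v := g k a • b - g k b • a
  have hkv : g k v = 0 := by
    simp only [v, map_sub, map_smul, smul_eq_mul]
    ring
  have hkw : g k w = 0 := by
    rw [hg.eq, hw, rob3_apply_null hkk (fun x => by rw [hωalt, hωk, neg_zero])]
  have hωw := omega_apply_of_dual_eq_omega_add (ω a b) hωk hHerm hkv
    (fun x => (hw x).trans (rob3_eq_omega_add g ω k a b x))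
  have hgv : ∀ x, g v x = g k a * g b x - g k b * g a x := fun x => by
    simp only [v, map_sub, map_smul, LinearMap.sub_apply, LinearMap.smul_apply, smul_eq_mul]
  rw [Rob3, hωalt c, hωalt d, hωw, hωw, hgv, hgv, hkw]
  ring

/-- Let `(V,g)` be Lorentzian of dimension `2m+2`, `κ = g(k,·)` a
nonzero null 1-form, and `ω` a 2-form with `k ⌟ ω = 0` inducing a Hermitian
structure on the screen space of `K = span(k)`; the Hermitian condition is
encoded by the splitting vector `ℓ` and the identity
`ω_a{}^e ω_{eb} = −(g_{ab} − κ_a λ_b − λ_a κ_b)`.  Then the 3-form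
`ρ = 3 κ_{[a} ω_{bc]}` satisfies
`ρ_{ab}{}^e ρ_{cde} = −4 κ_{[a} g_{b][c} κ_{d]}`. -/
theorem robinson_three_form_squared (m : ℕ) (V : Type*) [AddCommGroup V] [Module ℝ V]
    [FiniteDimensional ℝ V]
    (g : V →ₗ[ℝ] V →ₗ[ℝ] ℝ)
    (e : Module.Basis (Fin (2 * m + 2)) ℝ V)
    (hGe : ∀ i j, g (e i) (e j) =
      if i = j then (if (i : ℕ) = 2 * m + 1 then (-1 : ℝ) else 1) else 0)
    (k : V) (hk : k ≠ 0) (hkk : g k k = 0)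
    (l : V) (hkl : g k l = 1) (hll : g l l = 0)
    (ω : V →ₗ[ℝ] V →ₗ[ℝ] ℝ)
    (hωalt : ∀ v w, ω v w = - ω w v)
    (hωk : ∀ v, ω k v = 0) (hωl : ∀ v, ω l v = 0)
    (hHerm : ∀ v w u, (∀ x, g u x = ω v x) →
      ω u w = -(g v w - g k v * g l w - g l v * g k w)) :
    ∀ a b c d w, (∀ x, g w x = Rob3 g ω k a b x) →
      Rob3 g ω k c d w =
        -(g k a * g b c * g k d - g k b * g a c * g k d
          - g k a * g b d * g k c + g k b * g a d * g k c) :=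
  robinson_three_form_squared_general m V g e hGe k hkk l ω hωalt hωk hHerm
end

section
/- In dimension four (m=1), the Robinson 3-form associated to an optical 1-form κ is the Hodge dual of κ: if ρ_{abc} = 3κ_{[a}ω_{bc]} where ω induces the Hermitian structure on the 2-dimensional screen space, then ρ = ⋆κ up to sign, for an oriented Lorentzian 4-space. -/
/-! Complete `k` to a frame `(k, l, s, u)` with `s` a non-isotropic vector of the screen
`{k, l}^⊥` and `u = J s` the vector `g`-dual to `ω(s, ·)`. With `c = g(s, s)` the frame has
Gram matrix `[[0, 1], [1, 0]] ⊕ c I₂`, and in its coordinates `κ = x₁` and `ω = c x₂ ∧ x₃`,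
so `ρ = c · det_b(k, ·, ·, ·)`, while `ε = det_e(b) · det_b`. Comparing the Gram determinants
of `g` in `e` and in the frame gives `c² = det_e(b)²`. -/

open Module
open LinearMap (BilinForm)

section Screen

variable {K V : Type*} [Field K] [AddCommGroup V] [Module K V] {B : BilinForm K V} {k l : V}

def screenProj (B : BilinForm K V) (k l v : V) : V := v - B l v • k - B k v • l

theorem apply_screenProj_left (hkk : B k k = 0) (hkl : B k l = 1) (v : V) :
    B k (screenProj B k l v) = 0 := by
  simp [screenProj, hkk, hkl]

theorem apply_screenProj_right (hlk : B l k = 1) (hll : B l l = 0) (v : V) :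
    B l (screenProj B k l v) = 0 := by
  simp [screenProj, hlk, hll]

theorem eq_smul_add_smul_add_screenProj (v : V) :
    v = B l v • k + B k v • l + screenProj B k l v := by
  simp only [screenProj]; abel

theorem exists_screen_nonisotropic [NeZero (2 : K)] [FiniteDimensional K V]
    (hB : B.IsSymm) (hnd : B.Nondegenerate) (hkk : B k k = 0) (hkl : B k l = 1)
    (hll : B l l = 0) (hdim : 2 < finrank K V) :
    ∃ s, B k s = 0 ∧ B l s = 0 ∧ B s s ≠ 0 := by
  by_contra! hiso
  have hlk : B l k = 1 := by rw [hB.eq, hkl]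
  -- a totally isotropic screen would lie in the radical of `B`
  have hscreen : ∀ w, B k w = 0 → B l w = 0 → w = 0 := by
    intro w hkw hlw
    have hww' : ∀ w', B k w' = 0 → B l w' = 0 → B w w' = 0 := by
      intro w' hkw' hlw'
      have h := hiso (w + w') (by simp [hkw, hkw']) (by simp [hlw, hlw'])
      simp only [map_add, LinearMap.add_apply, hiso w hkw hlw, hiso w' hkw' hlw',
        hB.eq w' w] at h
      have h2 : (2 : K) * B w w' = 0 := by linear_combination h
      exact (mul_eq_zero.mp h2).resolve_left two_ne_zero
    refine hnd.1 w fun v => ?_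
    rw [eq_smul_add_smul_add_screenProj (B := B) (k := k) (l := l) v]
    simp [hB.eq w k, hB.eq w l, hkw, hlw, hww' _ (apply_screenProj_left hkk hkl v)
      (apply_screenProj_right hlk hll v)]
  have hspan : (⊤ : Submodule K V) ≤ Submodule.span K (Set.range ![k, l]) := by
    intro v _
    rw [eq_smul_add_smul_add_screenProj (B := B) (k := k) (l := l) v,
      hscreen _ (apply_screenProj_left hkk hkl v) (apply_screenProj_right hlk hll v), add_zero]
    exact add_mem (Submodule.smul_mem _ _ (Submodule.subset_span ⟨0, rfl⟩))
      (Submodule.smul_mem _ _ (Submodule.subset_span ⟨1, rfl⟩))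
  have := (Submodule.finrank_mono hspan).trans (finrank_range_le_card ![k, l])
  simp only [finrank_top, Fintype.card_fin] at this
  omega

end Screen

theorem LinearMap.linearIndependent_of_det_gram_ne_zero {K V ι : Type*} [Field K]
    [AddCommGroup V] [Module K V] [Fintype ι] [DecidableEq ι] (B : V →ₗ[K] V →ₗ[K] K)
    (w : ι → V) (h : (Matrix.of fun i j => B (w i) (w j)).det ≠ 0) : LinearIndependent K w := by
  rw [Fintype.linearIndependent_iff]
  intro t ht
  refine congrFun (Matrix.eq_zero_of_vecMul_eq_zero h ?_)
  ext j
  have := congrArg (fun v => B v (w j)) ht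
  simpa [Matrix.vecMul, dotProduct, map_sum] using this

theorem Module.Basis.det_cons_self_zero {R M : Type*} [CommRing R] [AddCommGroup M] [Module R M]
    {n : ℕ} (b : Basis (Fin (n + 1)) R M) (v : Fin n → M) :
    b.det (Fin.cons (b 0) v) = (Matrix.of fun i j => b.repr (v j) i.succ).det := by
  rw [Basis.det_apply, Matrix.det_succ_column_zero, Fin.sum_univ_succ]
  simp [Basis.toMatrix_apply, Fin.succ_ne_zero, Matrix.submatrix]

theorem LinearMap.det_toMatrix₂_eq_det_sq_mul {R M ι : Type*} [CommRing R] [AddCommGroup M]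
    [Module R M] [Fintype ι] [DecidableEq ι] (b c : Basis ι R M) (B : M →ₗ[R] M →ₗ[R] R) :
    (toMatrix₂ c c B).det = b.det c ^ 2 * (toMatrix₂ b b B).det := by
  rw [← LinearMap.toMatrix₂_mul_basis_toMatrix b b, Matrix.det_mul, Matrix.det_mul,
    Matrix.det_transpose, Basis.det_apply]
  ring

theorem LinearMap.apply_eq_sum_toMatrix₂ {R M ι : Type*} [CommRing R] [AddCommGroup M]
    [Module R M] [Fintype ι] [DecidableEq ι] (b : Basis ι R M) (B : M →ₗ[R] M →ₗ[R] R)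
    (x y : M) : B x y = ∑ i, ∑ j, b.repr x i * b.repr y j * toMatrix₂ b b B i j := by
  conv_lhs => rw [← Matrix.toLinearMap₂_toMatrix₂ b b B]
  simp only [Matrix.toLinearMap₂_apply, smul_eq_mul, mul_assoc]

section DiagonalBasis

variable {R M ι : Type*} [CommRing R] [AddCommGroup M] [Module R M] {B : M →ₗ[R] M →ₗ[R] R}
  {b : Basis ι R M} {η : ι → R}

theorem LinearMap.toMatrix₂_eq_diagonal [Fintype ι] [DecidableEq ι]
    (h : ∀ i j, B (b i) (b j) = if i = j then η i else 0) :
    toMatrix₂ b b B = Matrix.diagonal η := by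
  ext i j
  rw [toMatrix₂_apply, h, Matrix.diagonal_apply]

theorem LinearMap.BilinForm.isSymm_of_diagonal [DecidableEq ι]
    (h : ∀ i j, B (b i) (b j) = if i = j then η i else 0) : BilinForm.IsSymm B :=
  (isSymm_iff_basis b).2 fun i j => by
    by_cases hij : i = j <;> simp [h, hij, Ne.symm]

end DiagonalBasis

section RobinsonFrame

variable {K V : Type*} [Field K] [AddCommGroup V] [Module K V] {g ω : V →ₗ[K] V →ₗ[K] K}
  {k l s u : V}

theorem apply_self_eq_zero_of_skew [NeZero (2 : K)] (hω : ∀ v w, ω v w = -ω w v) (v : V) :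
    ω v v = 0 :=
  (mul_eq_zero.mp (by linear_combination hω v v : (2 : K) * ω v v = 0)).resolve_left two_ne_zero

def robinsonGram (c : K) : Matrix (Fin 4) (Fin 4) K :=
  !![0, 1, 0, 0; 1, 0, 0, 0; 0, 0, c, 0; 0, 0, 0, c]

def screenForm (c : K) : Matrix (Fin 4) (Fin 4) K :=
  !![0, 0, 0, 0; 0, 0, 0, 0; 0, 0, 0, c; 0, 0, -c, 0]

theorem det_robinsonGram (c : K) : (robinsonGram c).det = -c ^ 2 := by
  simp [robinsonGram, Matrix.det_succ_row_zero, Fin.sum_univ_succ, Fin.succAbove, sq]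

theorem gram_frame_eq_robinsonGram [NeZero (2 : K)] (hg : BilinForm.IsSymm g) (hkk : g k k = 0)
    (hkl : g k l = 1) (hll : g l l = 0) (hks : g k s = 0) (hls : g l s = 0)
    (hωalt : ∀ v w, ω v w = -ω w v) (hωk : ∀ v, ω k v = 0) (hωl : ∀ v, ω l v = 0)
    (hu : ∀ x, g u x = ω s x) (hωu : ∀ x, ω u x = -g s x) :
    Matrix.of (fun i j => g (![k, l, s, u] i) (![k, l, s, u] j)) = robinsonGram (g s s) := by
  have hku : g k u = 0 := by rw [hg.eq, hu, hωalt, hωk, neg_zero]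
  have hlu : g l u = 0 := by rw [hg.eq, hu, hωalt, hωl, neg_zero]
  have hsu : g s u = 0 := by rw [hg.eq, hu, apply_self_eq_zero_of_skew hωalt]
  have huu : g u u = g s s := by rw [hu, hωalt, hωu, neg_neg]
  ext i j
  fin_cases i <;> fin_cases j <;>
    simp [robinsonGram, hkk, hkl, hll, hks, hls, hku, hlu, hsu, huu, hg.eq l k, hg.eq s k,
      hg.eq s l, hg.eq u k, hg.eq u l, hg.eq u s]

theorem omega_frame_eq_screenForm [NeZero (2 : K)] (hωalt : ∀ v w, ω v w = -ω w v)
    (hωk : ∀ v, ω k v = 0) (hωl : ∀ v, ω l v = 0) (hωu : ∀ x, ω u x = -g s x) :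
    Matrix.of (fun i j => ω (![k, l, s, u] i) (![k, l, s, u] j)) = screenForm (g s s) := by
  have hsu : ω s u = g s s := by rw [hωalt, hωu, neg_neg]
  have huu : ω u u = 0 := apply_self_eq_zero_of_skew hωalt u
  ext i j
  fin_cases i <;> fin_cases j <;>
    simp [screenForm, hωk, hωl, hωalt _ k, hωalt _ l, hωu s, hsu, huu,
      apply_self_eq_zero_of_skew hωalt s]

end RobinsonFrame

theorem exists_basis_robinsonGram_screenForm {K V : Type*} [Field K] [NeZero (2 : K)]
    [AddCommGroup V] [Module K V] [FiniteDimensional K V] {g ω : V →ₗ[K] V →ₗ[K] K} {k l : V}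
    (hg : BilinForm.IsSymm g) (hnd : BilinForm.Nondegenerate g) (hdim : finrank K V = 4)
    (hkk : g k k = 0) (hkl : g k l = 1) (hll : g l l = 0)
    (hωalt : ∀ v w, ω v w = -ω w v) (hωk : ∀ v, ω k v = 0) (hωl : ∀ v, ω l v = 0)
    (hHerm : ∀ v w u, (∀ x, g u x = ω v x) →
      ω u w = -(g v w - g k v * g l w - g l v * g k w)) :
    ∃ (b : Basis (Fin 4) K V) (c : K), c ≠ 0 ∧ b 0 = k ∧
      LinearMap.toMatrix₂ b b g = robinsonGram c ∧
      LinearMap.toMatrix₂ b b ω = screenForm c := by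
  obtain ⟨s, hks, hls, hss⟩ := exists_screen_nonisotropic hg hnd hkk hkl hll (by omega)
  set u := (BilinForm.toDual g hnd).symm (ω s)
  have hu : ∀ x, g u x = ω s x := BilinForm.apply_toDual_symm_apply (ω s)
  have hωu : ∀ x, ω u x = -g s x := fun x => by simpa [hks, hls] using hHerm s x u hu
  have hG := gram_frame_eq_robinsonGram hg hkk hkl hll hks hls hωalt hωk hωl hu hωu
  have hli : LinearIndependent K ![k, l, s, u] :=
    g.linearIndependent_of_det_gram_ne_zero _ <| by
      rw [hG, det_robinsonGram]; exact neg_ne_zero.2 (pow_ne_zero 2 hss)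
  let b := basisOfLinearIndependentOfCardEqFinrank hli (by simp [hdim])
  have hb : ⇑b = ![k, l, s, u] := coe_basisOfLinearIndependentOfCardEqFinrank hli _
  refine ⟨b, g s s, hss, by simp [hb], ?_, ?_⟩
  · ext i j
    rw [LinearMap.toMatrix₂_apply, hb, ← hG, Matrix.of_apply]
  · ext i j
    rw [LinearMap.toMatrix₂_apply, hb, ← omega_frame_eq_screenForm hωalt hωk hωl hωu,
      Matrix.of_apply]

theorem rob3_eq_mul_det {V : Type*} [AddCommGroup V] [Module ℝ V]
    {g ω : V →ₗ[ℝ] V →ₗ[ℝ] ℝ} {c : ℝ} (b : Basis (Fin 4) ℝ V)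
    (hg : LinearMap.toMatrix₂ b b g = robinsonGram c)
    (hω : LinearMap.toMatrix₂ b b ω = screenForm c) (x y z : V) :
    Rob3 g ω (b 0) x y z = c * b.det ![b 0, x, y, z] := by
  have hgk : ∀ v, g (b 0) v = b.repr v 1 := fun v => by
    rw [LinearMap.apply_eq_sum_toMatrix₂ b, hg]
    simp [Fin.sum_univ_four, robinsonGram]
  have hωc : ∀ v w, ω v w = c * (b.repr v 2 * b.repr w 3 - b.repr v 3 * b.repr w 2) :=
    fun v w => by
      rw [LinearMap.apply_eq_sum_toMatrix₂ b, hω]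
      simp only [screenForm, Matrix.of_apply, Matrix.cons_val', Matrix.cons_val_fin_one,
        Fin.sum_univ_four, Matrix.cons_val_zero, Matrix.cons_val_one, Matrix.cons_val, mul_zero,
        add_zero, zero_add, mul_neg]
      ring
  rw [show ![b 0, x, y, z] = Fin.cons (b 0) ![x, y, z] from rfl, b.det_cons_self_zero,
    Matrix.det_fin_three]
  simp only [Rob3, hgk, hωc, Matrix.of_apply, Matrix.cons_val_zero, Fin.succ_zero_eq_one,
    Matrix.cons_val_one, Fin.succ_one_eq_two, Matrix.cons_val, Fin.reduceSucc]
  ring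

theorem robinson_three_form_is_hodge_dual_general (V : Type*) [AddCommGroup V] [Module ℝ V]
    [FiniteDimensional ℝ V]
    (g : V →ₗ[ℝ] V →ₗ[ℝ] ℝ)
    (e : Module.Basis (Fin 4) ℝ V)
    (hGe : ∀ i j, g (e i) (e j) =
      if i = j then (if (i : ℕ) = 3 then (-1 : ℝ) else 1) else 0)
    (ε : AlternatingMap ℝ V ℝ (Fin 4))
    (hε : ε ![e 0, e 1, e 2, e 3] = 1)
    (k : V) (hkk : g k k = 0)
    (l : V) (hkl : g k l = 1) (hll : g l l = 0)
    (ω : V →ₗ[ℝ] V →ₗ[ℝ] ℝ)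
    (hωalt : ∀ v w, ω v w = - ω w v)
    (hωk : ∀ v, ω k v = 0) (hωl : ∀ v, ω l v = 0)
    (hHerm : ∀ v w u, (∀ x, g u x = ω v x) →
      ω u w = -(g v w - g k v * g l w - g l v * g k w)) :
    (∀ x y z, Rob3 g ω k x y z = ε ![k, x, y, z]) ∨
    (∀ x y z, Rob3 g ω k x y z = -ε ![k, x, y, z]) := by
  have hGdet : (LinearMap.toMatrix₂ e e g).det = -1 := by
    simp [LinearMap.toMatrix₂_eq_diagonal hGe, Fin.prod_univ_four]
  have hg : BilinForm.IsSymm g := BilinForm.isSymm_of_diagonal hGe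
  have hnd : BilinForm.Nondegenerate g :=
    LinearMap.nondegenerate_of_det_ne_zero e (by rw [hGdet]; norm_num)
  obtain ⟨b, c, -, rfl, hgb, hωb⟩ := exists_basis_robinsonGram_screenForm hg hnd
    (finrank_eq_card_basis e |>.trans (Fintype.card_fin 4)) hkk hkl hll hωalt hωk hωl hHerm
  have hεe : ε = e.det := by
    have he : ⇑e = ![e 0, e 1, e 2, e 3] := by ext i; fin_cases i <;> rfl
    rw [ε.eq_smul_basis_det e, he, hε, one_smul]
  have hεb : ∀ x y z, ε ![b 0, x, y, z] = e.det b * b.det ![b 0, x, y, z] := fun x y z => by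
    rw [hεe, ← smul_eq_mul, ← AlternatingMap.smul_apply, ← e.det.eq_smul_basis_det b]
  have hsq : e.det b ^ 2 = c ^ 2 := by
    have := LinearMap.det_toMatrix₂_eq_det_sq_mul e b g
    rw [hgb, det_robinsonGram, hGdet] at this
    linarith
  rcases sq_eq_sq_iff_eq_or_eq_neg.1 hsq with h | h
  · exact Or.inl fun x y z => by rw [rob3_eq_mul_det b hgb hωb, hεb, h]
  · exact Or.inr fun x y z => by rw [rob3_eq_mul_det b hgb hωb, hεb, h, neg_mul, neg_neg]

/-- In dimension four, the Robinson 3-form associated to an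
optical 1-form `κ` is, up to sign, the Hodge dual of `κ`: if
`ρ_{abc} = 3 κ_{[a} ω_{bc]}` where `ω` induces the Hermitian structure on the
2-dimensional screen space, then `ρ = ± ⋆κ` for an oriented Lorentzian
4-space; here `(⋆κ)(x,y,z) = ε(k,x,y,z)` with `ε` the volume form normalised
on a pseudo-orthonormal oriented basis. -/
theorem robinson_three_form_is_hodge_dual (V : Type*) [AddCommGroup V] [Module ℝ V]
    [FiniteDimensional ℝ V]
    (g : V →ₗ[ℝ] V →ₗ[ℝ] ℝ)
    (e : Module.Basis (Fin 4) ℝ V)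
    (hGe : ∀ i j, g (e i) (e j) =
      if i = j then (if (i : ℕ) = 3 then (-1 : ℝ) else 1) else 0)
    (ε : AlternatingMap ℝ V ℝ (Fin 4))
    (hε : ε ![e 0, e 1, e 2, e 3] = 1)
    (k : V) (hk : k ≠ 0) (hkk : g k k = 0)
    (l : V) (hkl : g k l = 1) (hll : g l l = 0)
    (ω : V →ₗ[ℝ] V →ₗ[ℝ] ℝ)
    (hωalt : ∀ v w, ω v w = - ω w v)
    (hωk : ∀ v, ω k v = 0) (hωl : ∀ v, ω l v = 0)
    (hHerm : ∀ v w u, (∀ x, g u x = ω v x) →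
      ω u w = -(g v w - g k v * g l w - g l v * g k w)) :
    (∀ x y z, Rob3 g ω k x y z = ε ![k, x, y, z]) ∨
    (∀ x y z, Rob3 g ω k x y z = -ε ![k, x, y, z]) :=
  robinson_three_form_is_hodge_dual_general V g e hGe ε hε k hkk l hkl hll ω hωalt hωk hωl hHerm
end

section
/- Let (M,g) be a Lorentzian manifold with a nearly Robinson structure (N,K), i.e. [K,N] ⊆ N, where N is an almost null complex distribution of real index one and K the associated real null line distribution. Then the congruence of null curves tangent to K is geodesic: for any section k of K, ∇_k k is again a section of K. -/
/-- Let `(M,g)` be a Lorentzian manifold with a nearly Robinson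
structure `(N,K)`, i.e. `[K,N] ⊆ N`.  Then the congruence of null curves
tangent to `K` is geodesic: `∇_k k` is again a section of `K` for any section
`k` of `K`.

We use the standard algebraic model of (complexified) Lorentzian geometry:
`F` is the commutative ring of complex-valued smooth functions with complex
conjugation `star`, `X` the `F`-module of complexified vector fields with Lie
bracket `bra` and action `D` on functions, `g` the complex-bilinear extension
of the metric, `conj` the induced conjugation on vector fields, and `nabla`
the Levi-Civita connection (characterised by the torsion-free and metric
properties).  `N` is a totally null maximal submodule (`N = N^⊥`), `K` is the
real null line distribution spanned by the real section `k`, with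
`ℂK = N ∩ N̄`. -/
theorem nearly_robinson_geodesic
    (F : Type*) [CommRing F] [StarRing F] [Algebra ℝ F]
    (X : Type*) [AddCommGroup X] [Module F X]
    (D : X → F → F) (bra : X → X → X)
    (g : X →ₗ[F] X →ₗ[F] F)
    (conj : X →ₛₗ[starRingEnd F] X)
    (nabla : X → X → X)
    (hDadd : ∀ u a b, D u (a + b) = D u a + D u b)
    (hconj2 : ∀ v, conj (conj v) = v)
    (hgsymm : ∀ v w, g v w = g w v)
    (hgconj : ∀ v w, g (conj v) (conj w) = star (g v w))
    (hbraconj : ∀ u v, conj (bra u v) = bra (conj u) (conj v))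
    (hnabla_smul₁ : ∀ (a : F) (u w : X), nabla (a • u) w = a • nabla u w)
    (hnabla_leibniz : ∀ (u : X) (a : F) (v : X),
      nabla u (a • v) = a • nabla u v + D u a • v)
    (htorsion : ∀ u v, nabla u v - nabla v u = bra u v)
    (hmetric : ∀ u v w, D u (g v w) = g (nabla u v) w + g v (nabla u w))
    (N : Submodule F X)
    (hNnull : ∀ u ∈ N, ∀ v ∈ N, g u v = 0)
    (hNmax : ∀ u, (∀ v ∈ N, g u v = 0) → u ∈ N)
    (k : X) (hkreal : conj k = k)
    (hK : Submodule.span F {k} = N ⊓ N.comap conj)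
    (hKN : ∀ v ∈ N, bra k v ∈ N) :
    ∀ u ∈ Submodule.span F {k}, nabla u u ∈ Submodule.span F {k} := by

  have hkspan : k ∈ Submodule.span F {k} := Submodule.mem_span_singleton_self k
  have hkNK : k ∈ N ⊓ N.comap conj := hK ▸ hkspan
  have hkN : k ∈ N := hkNK.1
  have hD0 : ∀ v, D v (0:F) = 0 := by
    intro v
    have := hDadd v 0 0
    simpa using this.symm
  have hhalf : ∀ x : F, x + x = 0 → x = 0 := by
    intro x hx
    have h2 : ((2:ℝ)⁻¹) • (x + x) = x := by
      rw [smul_add, ← add_smul]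
      norm_num
    rw [hx, smul_zero] at h2
    exact h2.symm
  have hgkk : g k k = 0 := hNnull k hkN k hkN
  have hgnk : ∀ v, g k (nabla v k) = 0 := by
    intro v
    have h := hmetric v k k
    rw [hgkk, hD0, hgsymm (nabla v k) k] at h
    exact hhalf _ h.symm
  have hconjN : ∀ w ∈ N, g k (conj w) = 0 := by
    intro w hw
    calc g k (conj w) = g (conj k) (conj w) := by rw [hkreal]
      _ = star (g k w) := hgconj k w
      _ = 0 := by rw [hNnull k hkN w hw, star_zero]
  have hnkv : ∀ v, nabla k v = bra k v + nabla v k := by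
    intro v
    have h := htorsion k v
    rw [← h]; abel
  -- g (∇_k k) v = 0 for v ∈ N
  have hcase1 : ∀ v ∈ N, g (nabla k k) v = 0 := by
    intro v hv
    have h := hmetric k k v
    rw [hNnull k hkN v hv, hD0, hnkv v, map_add, hNnull k hkN _ (hKN v hv),
      hgnk v, add_zero, add_zero] at h
    exact h.symm
  -- g (∇_k k) (conj w) = 0 for w ∈ N
  have hcase2 : ∀ w ∈ N, g (nabla k k) (conj w) = 0 := by
    intro w hw
    have h := hmetric k k (conj w)
    have hbrc : bra k (conj w) = conj (bra k w) := by
      rw [hbraconj, hkreal]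
    rw [hconjN w hw, hD0, hnkv (conj w), map_add, hbrc,
      hconjN _ (hKN w hw), hgnk (conj w), add_zero, add_zero] at h
    exact h.symm
  have hnkkN : nabla k k ∈ N := hNmax _ hcase1
  have hnkkNc : nabla k k ∈ N.comap conj := by
    refine hNmax _ ?_
    intro v hv
    have h1 : g (conj (nabla k k)) (conj (conj v)) = star (g (nabla k k) (conj v)) :=
      hgconj _ _
    rw [hconj2, hcase2 v hv, star_zero] at h1
    exact h1
  have hnkk : nabla k k ∈ Submodule.span F {k} := by
    rw [hK]; exact ⟨hnkkN, hnkkNc⟩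
  intro u hu
  obtain ⟨a, rfl⟩ := Submodule.mem_span_singleton.mp hu
  rw [hnabla_smul₁, hnabla_leibniz]
  exact Submodule.smul_mem _ a (Submodule.add_mem _
    (Submodule.smul_mem _ a hnkk) (Submodule.smul_mem _ _ hkspan))
end
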